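/- arXiv:1406.2798 — 2 statements merged into one kernel-verified Lean document; each statement's English description precedes it below -/
import Mathlib

section
/- Let (Ω, ℱ, P) be a probability space, let 𝒢 and ℋ be sub-σ-algebras of ℱ, let ε > 0 and let D ∈ ℋ. Suppose that for every E ∈ 𝒢 and every A ∈ ℋ with A ⊆ D and P(A) > 0 one has |P(E|A) − P(E)| < ε. Then β(𝒢, ℋ) ≤ ε·P(D) + P(Dᶜ). -/
/-!
For `A ⊆ D` in `H`, the hypothesis bounds the independence defect `P(E ∩ A) - P(E) P(A)` by
`ε P(A)` for every `E ∈ G`. The defect is additive in `E`, so grouping the positive and the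
negative terms shows that its absolute values over a partition `{Eᵢ}` of `G` sum to at most
`2 ε P(A)`. For `A ⊆ Dᶜ` the trivial bound `P(E ∩ A) + P(E) P(A)` sums to `2 P(A)`. Splitting
every `Aⱼ` along `D` and summing over `j` gives `2 (ε P(D) + P(Dᶜ))`.
-/

open MeasureTheory

/-- The β-mixing coefficient between two sub-σ-algebras `G` and `H`:
`β(G,H) = (1/2) · sup ∑ᵢ∑ⱼ |P(Eᵢ ∩ Aⱼ) − P(Eᵢ)·P(Aⱼ)|`, the supremum over all
finite measurable partitions `{Eᵢ} ⊆ G` and `{Aⱼ} ⊆ H` of the space. -/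
noncomputable def betaMix {Ω : Type*} [MeasurableSpace Ω] (P : Measure Ω)
    (G H : MeasurableSpace Ω) : ℝ :=
  (1 / 2) * sSup { x : ℝ | ∃ (I J : ℕ) (E : Fin I → Set Ω) (A : Fin J → Set Ω),
    (∀ i, MeasurableSet[G] (E i)) ∧ (∀ j, MeasurableSet[H] (A j)) ∧
    Pairwise (Function.onFun Disjoint E) ∧ Pairwise (Function.onFun Disjoint A) ∧
    (⋃ i, E i) = Set.univ ∧ (⋃ j, A j) = Set.univ ∧
    x = ∑ i, ∑ j, |(P (E i ∩ A j)).toReal - (P (E i)).toReal * (P (A j)).toReal| }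

open Finset Function

theorem sum_abs_le_two_mul_of_forall_abs_sum_le {ι : Type*} (s : Finset ι) {a : ι → ℝ} {c : ℝ}
    (h : ∀ t ⊆ s, |∑ i ∈ t, a i| ≤ c) : ∑ i ∈ s, |a i| ≤ 2 * c := by
  classical
  rw [← sum_filter_add_sum_filter_not s (fun i => 0 ≤ a i)]
  have hpos : ∑ i ∈ s with 0 ≤ a i, |a i| = ∑ i ∈ s with 0 ≤ a i, a i :=
    sum_congr rfl fun i hi => abs_of_nonneg (mem_filter.1 hi).2
  have hneg : ∑ i ∈ s with ¬0 ≤ a i, |a i| = -∑ i ∈ s with ¬0 ≤ a i, a i := by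
    rw [← sum_neg_distrib]
    exact sum_congr rfl fun i hi => abs_of_neg (not_le.1 (mem_filter.1 hi).2)
  have hpos_le := (le_abs_self _).trans (h _ (filter_subset (fun i => 0 ≤ a i) s))
  have hneg_le := (neg_le_abs _).trans (h _ (filter_subset (fun i => ¬0 ≤ a i) s))
  linarith

section IndepDefect

variable {Ω : Type*} {mΩ : MeasurableSpace Ω} (P : Measure Ω)

noncomputable def indepDefect (E A : Set Ω) : ℝ :=
  P.real (E ∩ A) - P.real E * P.real A

variable [IsFiniteMeasure P]

theorem sum_measureReal_inter_of_partition {ι : Type*} [Fintype ι] {E : ι → Set Ω}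
    (hE : ∀ i, MeasurableSet (E i)) (hdisj : Pairwise (Disjoint on E)) (hcov : ⋃ i, E i = Set.univ)
    {X : Set Ω} (hX : MeasurableSet X) : ∑ i, P.real (E i ∩ X) = P.real X := by
  rw [← measureReal_iUnion_fintype
    (fun i j hij => (hdisj hij).mono Set.inter_subset_left Set.inter_subset_left)
    (fun i => (hE i).inter hX), ← Set.iUnion_inter, hcov, Set.univ_inter]

theorem indepDefect_biUnion_left {ι : Type*} (t : Finset ι) {E : ι → Set Ω}
    (hE : ∀ i, MeasurableSet (E i)) (hdisj : Pairwise (Disjoint on E))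
    {A : Set Ω} (hA : MeasurableSet A) :
    indepDefect P (⋃ i ∈ t, E i) A = ∑ i ∈ t, indepDefect P (E i) A := by
  simp only [indepDefect, Set.iUnion₂_inter, sum_sub_distrib, ← sum_mul]
  rw [measureReal_biUnion_finset (hdisj.set_pairwise _) (fun i _ => hE i),
    measureReal_biUnion_finset
      (fun i _ j _ hij => (hdisj hij).mono Set.inter_subset_left Set.inter_subset_left)
      (fun i _ => (hE i).inter hA)]

theorem indepDefect_eq_add_inter_compl (E A : Set Ω) {D : Set Ω} (hD : MeasurableSet D) :
    indepDefect P E A = indepDefect P E (A ∩ D) + indepDefect P E (A ∩ Dᶜ) := by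
  simp only [indepDefect, ← Set.sdiff_eq, ← Set.inter_assoc, ← Set.inter_sdiff_assoc]
  rw [← measureReal_inter_add_sdiff (s := E ∩ A) hD, ← measureReal_inter_add_sdiff (s := A) hD]
  ring

theorem abs_indepDefect_le_of_abs_cond_sub_lt {ε : ℝ} {E A : Set Ω}
    (h : 0 < P A → |P.real (E ∩ A) / P.real A - P.real E| < ε) :
    |indepDefect P E A| ≤ ε * P.real A := by
  rcases eq_zero_or_pos (P A) with hA | hA
  · have hA_real : P.real A = 0 := by simp [measureReal_def, hA]
    simp [indepDefect, hA_real, measureReal_mono_null Set.inter_subset_right hA_real]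
  · have hA_real : 0 < P.real A := ENNReal.toReal_pos hA.ne' (measure_ne_top P A)
    calc |indepDefect P E A| = |(P.real (E ∩ A) / P.real A - P.real E) * P.real A| := by
          rw [indepDefect, sub_mul, div_mul_cancel₀ _ hA_real.ne']
      _ = |P.real (E ∩ A) / P.real A - P.real E| * P.real A := by
          rw [abs_mul, abs_of_pos hA_real]
      _ ≤ ε * P.real A := by gcongr; exact (h hA).le

theorem sum_abs_indepDefect_le_two_mul_of_forall_abs_le {G : MeasurableSpace Ω}
    (hG : G ≤ mΩ) {ι : Type*} [Fintype ι] {E : ι → Set Ω}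
    (hE : ∀ i, MeasurableSet[G] (E i)) (hdisj : Pairwise (Disjoint on E))
    {A : Set Ω} (hA : MeasurableSet[mΩ] A) {c : ℝ}
    (hc : ∀ E', MeasurableSet[G] E' → |indepDefect P E' A| ≤ c) :
    ∑ i, |indepDefect P (E i) A| ≤ 2 * c :=
  sum_abs_le_two_mul_of_forall_abs_sum_le _ fun t _ => by
    rw [← indepDefect_biUnion_left P t (fun i => hG _ (hE i)) hdisj hA]
    exact hc _ (Finset.measurableSet_biUnion t fun i _ => hE i)

theorem sum_abs_indepDefect_le_two_mul [IsProbabilityMeasure P] {ι : Type*} [Fintype ι]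
    {E : ι → Set Ω} (hE : ∀ i, MeasurableSet (E i)) (hdisj : Pairwise (Disjoint on E))
    (hcov : ⋃ i, E i = Set.univ) {B : Set Ω} (hB : MeasurableSet B) :
    ∑ i, |indepDefect P (E i) B| ≤ 2 * P.real B := by
  have hsum_E : ∑ i, P.real (E i) = 1 := by
    simpa using sum_measureReal_inter_of_partition P hE hdisj hcov MeasurableSet.univ
  calc ∑ i, |indepDefect P (E i) B|
      ≤ ∑ i, (P.real (E i ∩ B) + P.real (E i) * P.real B) := by
        gcongr with i
        refine (abs_sub _ _).trans_eq ?_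
        rw [abs_of_nonneg measureReal_nonneg, abs_of_nonneg (by positivity)]
    _ = 2 * P.real B := by
        rw [sum_add_distrib, ← sum_mul, hsum_E,
          sum_measureReal_inter_of_partition P hE hdisj hcov hB]
        ring

theorem sum_abs_indepDefect_le_of_forall_abs_inter_le [IsProbabilityMeasure P]
    {G : MeasurableSpace Ω} (hG : G ≤ mΩ) {ι : Type*} [Fintype ι] {E : ι → Set Ω}
    (hE : ∀ i, MeasurableSet[G] (E i)) (hdisj : Pairwise (Disjoint on E))
    (hcov : ⋃ i, E i = Set.univ) {A D : Set Ω} (hA : MeasurableSet[mΩ] A)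
    (hD : MeasurableSet[mΩ] D) {ε : ℝ}
    (hcond : ∀ E', MeasurableSet[G] E' → |indepDefect P E' (A ∩ D)| ≤ ε * P.real (A ∩ D)) :
    ∑ i, |indepDefect P (E i) A| ≤ 2 * (ε * P.real (A ∩ D) + P.real (A ∩ Dᶜ)) := by
  have hE_meas : ∀ i, MeasurableSet[mΩ] (E i) := fun i => hG _ (hE i)
  calc ∑ i, |indepDefect P (E i) A|
      ≤ ∑ i, (|indepDefect P (E i) (A ∩ D)| + |indepDefect P (E i) (A ∩ Dᶜ)|) := by
        gcongr with i
        rw [indepDefect_eq_add_inter_compl P (E i) A hD]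
        exact abs_add_le _ _
    _ ≤ 2 * (ε * P.real (A ∩ D)) + 2 * P.real (A ∩ Dᶜ) := by
        rw [sum_add_distrib]
        gcongr
        · exact sum_abs_indepDefect_le_two_mul_of_forall_abs_le P hG hE hdisj (hA.inter hD) hcond
        · exact sum_abs_indepDefect_le_two_mul P hE_meas hdisj hcov (hA.inter hD.compl)
    _ = 2 * (ε * P.real (A ∩ D) + P.real (A ∩ Dᶜ)) := by ring

theorem sum_sum_abs_indepDefect_le [IsProbabilityMeasure P]
    {G : MeasurableSpace Ω} (hG : G ≤ mΩ) {ι κ : Type*} [Fintype ι] [Fintype κ]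
    {E : ι → Set Ω} (hE : ∀ i, MeasurableSet[G] (E i)) (hdisjE : Pairwise (Disjoint on E))
    (hcovE : ⋃ i, E i = Set.univ) {A : κ → Set Ω} (hA : ∀ j, MeasurableSet[mΩ] (A j))
    (hdisjA : Pairwise (Disjoint on A)) (hcovA : ⋃ j, A j = Set.univ)
    {D : Set Ω} (hD : MeasurableSet[mΩ] D) {ε : ℝ}
    (hcond : ∀ j E', MeasurableSet[G] E' →
      |indepDefect P E' (A j ∩ D)| ≤ ε * P.real (A j ∩ D)) :
    ∑ i, ∑ j, |indepDefect P (E i) (A j)| ≤ 2 * (ε * P.real D + P.real Dᶜ) := by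
  rw [sum_comm]
  calc ∑ j, ∑ i, |indepDefect P (E i) (A j)|
      ≤ ∑ j, 2 * (ε * P.real (A j ∩ D) + P.real (A j ∩ Dᶜ)) := by
        gcongr with j
        exact sum_abs_indepDefect_le_of_forall_abs_inter_le P hG hE hdisjE hcovE (hA j) hD
          (hcond j)
    _ = 2 * (ε * P.real D + P.real Dᶜ) := by
        rw [← mul_sum, sum_add_distrib, ← mul_sum,
          sum_measureReal_inter_of_partition P hA hdisjA hcovA hD,
          sum_measureReal_inter_of_partition P hA hdisjA hcovA hD.compl]

end IndepDefect

theorem betaMix_le_of_forall_partition {Ω : Type*} {mΩ : MeasurableSpace Ω} (P : Measure Ω)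
    (G H : MeasurableSpace Ω) {c : ℝ}
    (hc : ∀ (I J : ℕ) (E : Fin I → Set Ω) (A : Fin J → Set Ω),
      (∀ i, MeasurableSet[G] (E i)) → (∀ j, MeasurableSet[H] (A j)) →
      Pairwise (Disjoint on E) → Pairwise (Disjoint on A) →
      ⋃ i, E i = Set.univ → ⋃ j, A j = Set.univ →
      ∑ i, ∑ j, |indepDefect P (E i) (A j)| ≤ 2 * c) :
    @betaMix Ω mΩ P G H ≤ c := by
  unfold betaMix
  rw [one_div, inv_mul_le_iff₀ two_pos]
  refine csSup_le ⟨_, 1, 1, fun _ => Set.univ, fun _ => Set.univ, fun _ => MeasurableSet.univ,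
    fun _ => MeasurableSet.univ, Subsingleton.pairwise, Subsingleton.pairwise,
    Set.iUnion_const _, Set.iUnion_const _, rfl⟩ ?_
  rintro _ ⟨I, J, E, A, hE, hA, hdisjE, hdisjA, hcovE, hcovA, rfl⟩
  exact hc I J E A hE hA hdisjE hdisjA hcovE hcovA

theorem stmt0_general {Ω : Type*} [F : MeasurableSpace Ω] (P : Measure Ω) [IsProbabilityMeasure P]
    (G H : MeasurableSpace Ω) (hG : G ≤ F) (hH : H ≤ F)
    (ε : ℝ) (D : Set Ω) (hD : MeasurableSet[H] D)
    (h : ∀ E A : Set Ω, MeasurableSet[G] E → MeasurableSet[H] A → A ⊆ D → 0 < P A →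
      |(P (E ∩ A)).toReal / (P A).toReal - (P E).toReal| < ε) :
    @betaMix Ω F P G H ≤ ε * (P D).toReal + (P Dᶜ).toReal := by
  refine betaMix_le_of_forall_partition P G H fun I J E A hE hA hdisjE hdisjA hcovE hcovA => ?_
  refine sum_sum_abs_indepDefect_le P hG hE hdisjE hcovE (fun j => hH _ (hA j)) hdisjA hcovA
    (hH _ hD) fun j E' hE' => ?_
  exact abs_indepDefect_le_of_abs_cond_sub_lt P
    (h E' _ hE' ((hA j).inter hD) Set.inter_subset_right)

theorem stmt0 {Ω : Type*} [F : MeasurableSpace Ω] (P : Measure Ω) [IsProbabilityMeasure P]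
    (G H : MeasurableSpace Ω) (hG : G ≤ F) (hH : H ≤ F)
    (ε : ℝ) (hε : 0 < ε) (D : Set Ω) (hD : MeasurableSet[H] D)
    (h : ∀ E A : Set Ω, MeasurableSet[G] E → MeasurableSet[H] A → A ⊆ D → 0 < P A →
      |(P (E ∩ A)).toReal / (P A).toReal - (P E).toReal| < ε) :
    @betaMix Ω F P G H ≤ ε * (P D).toReal + (P Dᶜ).toReal :=
  stmt0_general (F := F) P G H hG hH ε D hD h
end

section
/- Let (Ω, ℱ, P) be a probability space, let ℋ be a sub-σ-algebra of ℱ, and let (𝒢_b)_{b>0} be a family of sub-σ-algebras of ℱ that is antitone in b (i.e. b ≤ b′ implies 𝒢_{b′} ⊆ 𝒢_b). Then lim_{b→∞} β(𝒢_b, ℋ) = 0 if and only if the following condition holds: for every ε > 0 there exist D ∈ ℋ with P(D) > 1 − ε and b > 0 such that for all E ∈ 𝒢_b and all A ∈ ℋ with A ⊆ D and P(A) > 0 one has |P(E|A) − P(E)| < ε. -/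
/-!
If `β(𝒢, ℋ)` is small, exhaust `Ω` by a maximal disjoint family of "bad" sets `A ∈ ℋ`, those
for which some `E ∈ 𝒢` has `|P(E ∩ A) - P(E) P(A)| ≥ ε P(A)`. Refining the witnesses `E` to a
common finite partition shows that any finitely many disjoint bad sets have total mass at most
`2β/ε`, so the union of the family (countable, as its members are disjoint and non-null) is small,
and by maximality its complement `D` carries no bad set. Conversely, given
such a `D`, split every cell `Aⱼ` of an `ℋ`-partition along `D`: inside `D`, the sum over an
`𝒢`-partition of the (signed, zero-sum) defects `P(Eᵢ ∩ B) - P(Eᵢ) P(B)` is twice the defect of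
the union of the cells where it is positive, hence at most `2 ε P(B)`; outside `D` there is at
most the mass `2 P(Dᶜ)`.
-/

open MeasureTheory

open Function

theorem exists_maximal_pairwiseDisjoint {α : Type*} (S : Set (Set α)) :
    ∃ 𝒜, Maximal (fun 𝒜 : Set (Set α) => 𝒜 ⊆ S ∧ 𝒜.PairwiseDisjoint id) 𝒜 :=
  zorn_subset _ fun c hcS hc =>
    ⟨⋃₀ c, ⟨Set.sUnion_subset fun _ h => (hcS h).1,
      (hc.pairwiseDisjoint_sUnion id).2 fun _ h => (hcS h).2⟩,
      fun _ h => Set.subset_sUnion_of_mem h⟩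

theorem Set.PairwiseDisjoint.countable_of_measure_pos {α : Type*} [MeasurableSpace α]
    {μ : Measure α} [SFinite μ] {𝒜 : Set (Set α)} (hd : 𝒜.PairwiseDisjoint id)
    (hm : ∀ s ∈ 𝒜, MeasurableSet s) (hpos : ∀ s ∈ 𝒜, 0 < μ s) : 𝒜.Countable := by
  have h := Measure.countable_meas_pos_of_disjoint_iUnion (μ := μ) (As := ((↑) : 𝒜 → Set α))
    (fun s => hm s s.2) fun s t hst => hd s.2 t.2 (Subtype.coe_injective.ne hst)
  simp only [fun s : 𝒜 => hpos s s.2, Set.ofPred_true, Set.countable_univ_iff] at h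
  exact Set.countable_coe_iff.1 h

theorem measureReal_sUnion_le_of_forall_finset {α : Type*} [MeasurableSpace α] {μ : Measure α}
    [IsFiniteMeasure μ] {𝒜 : Set (Set α)} (hc : 𝒜.Countable) (hd : 𝒜.PairwiseDisjoint id)
    (hm : ∀ s ∈ 𝒜, MeasurableSet s) {c : ℝ} (h : ∀ t : Finset 𝒜, ∑ s ∈ t, μ.real s ≤ c) :
    μ.real (⋃₀ 𝒜) ≤ c := by
  rw [measureReal_def, measure_sUnion hc hd hm, ENNReal.tsum_toReal_eq fun _ => measure_ne_top _ _]
  exact Real.tsum_le_of_sum_le (fun _ => ENNReal.toReal_nonneg) h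

theorem Finset.sum_abs_eq_two_mul_sum_filter_nonneg {ι : Type*} (s : Finset ι) (f : ι → ℝ)
    (h : ∑ i ∈ s, f i = 0) : ∑ i ∈ s, |f i| = 2 * ∑ i ∈ s with 0 ≤ f i, f i := by
  have hpos : ∀ i, f i + |f i| = 2 * (if 0 ≤ f i then f i else 0) := fun i => by
    split_ifs with hi
    · rw [abs_of_nonneg hi]; ring
    · rw [abs_of_neg (not_le.1 hi)]; ring
  rw [Finset.sum_filter, Finset.mul_sum, ← Finset.sum_congr rfl fun i _ => hpos i,
    Finset.sum_add_distrib, h, zero_add]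

namespace BetaMixing

variable {Ω : Type*}

structure IsMeasurablePartition (m : MeasurableSpace Ω) {ι : Type*} (E : ι → Set Ω) : Prop where
  measurableSet : ∀ i, MeasurableSet[m] (E i)
  pairwise_disjoint : Pairwise (Disjoint on E)
  iUnion_eq_univ : ⋃ i, E i = Set.univ

namespace IsMeasurablePartition

variable {ι κ : Type*} {m : MeasurableSpace Ω} {E : ι → Set Ω}

theorem mono {m' : MeasurableSpace Ω} (hE : IsMeasurablePartition m E) (h : m ≤ m') :
    IsMeasurablePartition m' E :=
  ⟨fun i => h _ (hE.measurableSet i), hE.pairwise_disjoint, hE.iUnion_eq_univ⟩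

theorem comp_equiv (hE : IsMeasurablePartition m E) (e : κ ≃ ι) :
    IsMeasurablePartition m (E ∘ e) :=
  ⟨fun k => hE.measurableSet (e k), hE.pairwise_disjoint.comp_of_injective e.injective,
    (e.surjective.iUnion_comp E).trans hE.iUnion_eq_univ⟩

theorem const_univ [Unique ι] :
    IsMeasurablePartition m fun _ : ι => (Set.univ : Set Ω) :=
  ⟨fun _ => MeasurableSet.univ, Subsingleton.pairwise, Set.iUnion_const _⟩

end IsMeasurablePartition

variable {G H : MeasurableSpace Ω} {mΩ : MeasurableSpace Ω} {P : Measure Ω}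

variable (P) in
def indicatorCov (E A : Set Ω) : ℝ := P.real (E ∩ A) - P.real E * P.real A

theorem indicatorCov_eq_mul (E : Set Ω) {A : Set Ω} (hA : P.real A ≠ 0) :
    indicatorCov P E A = (P.real (E ∩ A) / P.real A - P.real E) * P.real A := by
  rw [indicatorCov, sub_mul, div_mul_cancel₀ _ hA]

theorem abs_indicatorCov_le (E A : Set Ω) :
    |indicatorCov P E A| ≤ P.real (E ∩ A) + P.real E * P.real A := by
  refine (abs_sub _ _).trans_eq ?_
  rw [abs_of_nonneg measureReal_nonneg, abs_of_nonneg (by positivity)]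

section FiniteMeasure

variable [IsFiniteMeasure P]

theorem indicatorCov_biUnion_finset {ι : Type*} {s : Finset ι} {E : ι → Set Ω}
    (hE : ∀ i ∈ s, MeasurableSet (E i)) (hd : Set.PairwiseDisjoint ↑s E) {A : Set Ω}
    (hA : MeasurableSet A) :
    indicatorCov P (⋃ i ∈ s, E i) A = ∑ i ∈ s, indicatorCov P (E i) A := by
  have hdA : Set.PairwiseDisjoint ↑s fun i => E i ∩ A :=
    hd.mono fun _ => Set.inter_subset_left
  rw [indicatorCov, Set.iUnion₂_inter,
    measureReal_biUnion_finset hdA fun i hi => (hE i hi).inter hA,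
    measureReal_biUnion_finset hd hE, Finset.sum_mul, ← Finset.sum_sub_distrib]
  rfl

theorem indicatorCov_eq_inter_add_diff (E : Set Ω) (A : Set Ω) {D : Set Ω} (hD : MeasurableSet D) :
    indicatorCov P E A = indicatorCov P E (A ∩ D) + indicatorCov P E (A \ D) := by
  simp only [indicatorCov, ← Set.inter_assoc, ← Set.inter_sdiff_assoc]
  rw [← measureReal_inter_add_sdiff (s := E ∩ A) hD, ← measureReal_inter_add_sdiff (s := A) hD]
  ring

end FiniteMeasure

namespace IsMeasurablePartition

variable {ι : Type*} [Fintype ι] {E : ι → Set Ω} {B : Set Ω}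

theorem sum_measureReal_inter [IsFiniteMeasure P] (hE : IsMeasurablePartition mΩ E)
    (hB : MeasurableSet B) :
    ∑ i, P.real (E i ∩ B) = P.real B := by
  rw [← measureReal_iUnion_fintype
      (hE.pairwise_disjoint.mono fun _ _ h => h.mono Set.inter_subset_left Set.inter_subset_left)
      fun i => (hE.measurableSet i).inter hB,
    ← Set.iUnion_inter, hE.iUnion_eq_univ, Set.univ_inter]

variable [IsProbabilityMeasure P]

theorem sum_measureReal (hE : IsMeasurablePartition mΩ E) : ∑ i, P.real (E i) = 1 := by
  simpa using hE.sum_measureReal_inter (P := P) MeasurableSet.univ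

theorem sum_indicatorCov_eq_zero (hE : IsMeasurablePartition mΩ E) (hB : MeasurableSet B) :
    ∑ i, indicatorCov P (E i) B = 0 := by
  simp only [indicatorCov, Finset.sum_sub_distrib, ← Finset.sum_mul, hE.sum_measureReal_inter hB,
    hE.sum_measureReal, one_mul, sub_self]

theorem sum_abs_indicatorCov_le (hE : IsMeasurablePartition mΩ E) (hB : MeasurableSet B) :
    ∑ i, |indicatorCov P (E i) B| ≤ 2 * P.real B :=
  calc ∑ i, |indicatorCov P (E i) B|
      ≤ ∑ i, (P.real (E i ∩ B) + P.real (E i) * P.real B) :=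
        Finset.sum_le_sum fun i _ => abs_indicatorCov_le _ _
    _ = 2 * P.real B := by
        rw [Finset.sum_add_distrib, ← Finset.sum_mul, hE.sum_measureReal_inter hB,
          hE.sum_measureReal]
        ring

theorem abs_indicatorCov_biUnion_le (hE : IsMeasurablePartition mΩ E) (s : Finset ι)
    (hB : MeasurableSet B) :
    |indicatorCov P (⋃ i ∈ s, E i) B| ≤ ∑ i, |indicatorCov P (E i) B| := by
  rw [indicatorCov_biUnion_finset (fun i _ => hE.measurableSet i)
    (hE.pairwise_disjoint.set_pairwise _) hB]
  exact (Finset.abs_sum_le_sum_abs _ _).trans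
    (Finset.sum_le_sum_of_subset_of_nonneg (Finset.subset_univ s) fun _ _ _ => abs_nonneg _)

theorem sum_abs_indicatorCov_le_of_forall_le (hE : IsMeasurablePartition mΩ E)
    (hB : MeasurableSet B) {c : ℝ} (hc : ∀ s : Finset ι, indicatorCov P (⋃ i ∈ s, E i) B ≤ c) :
    ∑ i, |indicatorCov P (E i) B| ≤ 2 * c := by
  classical
  rw [Finset.sum_abs_eq_two_mul_sum_filter_nonneg _ _ (hE.sum_indicatorCov_eq_zero hB),
    ← indicatorCov_biUnion_finset (fun i _ => hE.measurableSet i)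
      (hE.pairwise_disjoint.set_pairwise _) hB]
  exact mul_le_mul_of_nonneg_left (hc _) zero_le_two

end IsMeasurablePartition

section BetaMix

def partitionSums (P : Measure Ω) (G H : MeasurableSpace Ω) : Set ℝ :=
  {x | ∃ (I J : ℕ) (E : Fin I → Set Ω) (A : Fin J → Set Ω), IsMeasurablePartition G E ∧
    IsMeasurablePartition H A ∧ x = ∑ i, ∑ j, |indicatorCov P (E i) (A j)|}

theorem betaMix_eq_sSup : betaMix P G H = 1 / 2 * sSup (partitionSums P G H) := by
  refine congrArg (fun S => 1 / 2 * sSup S) (Set.ext fun x => ⟨?_, ?_⟩)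
  · rintro ⟨I, J, E, A, hE, hA, hdE, hdA, huE, huA, rfl⟩
    exact ⟨I, J, E, A, ⟨hE, hdE, huE⟩, ⟨hA, hdA, huA⟩, rfl⟩
  · rintro ⟨I, J, E, A, hE, hA, rfl⟩
    exact ⟨I, J, E, A, hE.1, hA.1, hE.2, hA.2, hE.3, hA.3, rfl⟩

theorem betaMix_le {c : ℝ} (hc : ∀ x ∈ partitionSums P G H, x ≤ c) : betaMix P G H ≤ c / 2 := by
  have hne : (partitionSums P G H).Nonempty :=
    ⟨_, 1, 1, _, _, IsMeasurablePartition.const_univ, IsMeasurablePartition.const_univ, rfl⟩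
  rw [betaMix_eq_sSup]
  linarith [csSup_le hne hc]

variable [IsProbabilityMeasure P]

theorem sum_abs_indicatorCov_le_two {ι κ : Type*} [Fintype ι] [Fintype κ] {E : ι → Set Ω}
    {A : κ → Set Ω} (hE : IsMeasurablePartition mΩ E) (hA : IsMeasurablePartition mΩ A) :
    ∑ i, ∑ j, |indicatorCov P (E i) (A j)| ≤ 2 :=
  calc ∑ i, ∑ j, |indicatorCov P (E i) (A j)|
      = ∑ j, ∑ i, |indicatorCov P (E i) (A j)| := Finset.sum_comm
    _ ≤ ∑ j, 2 * P.real (A j) :=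
        Finset.sum_le_sum fun j _ => hE.sum_abs_indicatorCov_le (hA.measurableSet j)
    _ = 2 := by rw [← Finset.mul_sum, hA.sum_measureReal, mul_one]

theorem sum_abs_indicatorCov_le_two_mul_betaMix (hG : G ≤ mΩ) (hH : H ≤ mΩ) {ι κ : Type*}
    [Fintype ι] [Fintype κ] {E : ι → Set Ω} {A : κ → Set Ω} (hE : IsMeasurablePartition G E)
    (hA : IsMeasurablePartition H A) :
    ∑ i, ∑ j, |indicatorCov P (E i) (A j)| ≤ 2 * betaMix P G H := by
  have hbdd : BddAbove (partitionSums P G H) := by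
    refine ⟨2, ?_⟩
    rintro _ ⟨I, J, E, A, hE, hA, rfl⟩
    exact sum_abs_indicatorCov_le_two (hE.mono hG) (hA.mono hH)
  have hmem : ∑ i, ∑ j, |indicatorCov P (E i) (A j)| ∈ partitionSums P G H := by
    refine ⟨_, _, E ∘ (Fintype.equivFin ι).symm, A ∘ (Fintype.equivFin κ).symm,
      hE.comp_equiv _, hA.comp_equiv _, ?_⟩
    exact Fintype.sum_equiv (Fintype.equivFin ι) _ _ fun i =>
      Fintype.sum_equiv (Fintype.equivFin κ) _ _ fun j => by simp
  rw [betaMix_eq_sSup]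
  linarith [le_csSup hbdd hmem]

theorem betaMix_nonneg (hG : G ≤ mΩ) (hH : H ≤ mΩ) : 0 ≤ betaMix P G H := by
  have h := sum_abs_indicatorCov_le_two_mul_betaMix (P := P) hG hH
    (IsMeasurablePartition.const_univ (ι := Unit)) (IsMeasurablePartition.const_univ (ι := Unit))
  simp only [Finset.univ_unique, Finset.sum_singleton, indicatorCov, Set.inter_univ,
    probReal_univ, mul_one, sub_self, abs_zero] at h
  linarith

end BetaMix

def NearlyIndepOn (P : Measure Ω) (G H : MeasurableSpace Ω) (D : Set Ω) (ε : ℝ) : Prop :=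
  ∀ E A : Set Ω, MeasurableSet[G] E → MeasurableSet[H] A → A ⊆ D → 0 < P A →
    |P.real (E ∩ A) / P.real A - P.real E| < ε

namespace NearlyIndepOn

variable {D : Set Ω} {ε : ℝ}

theorem mono_left {G' : MeasurableSpace Ω} (h : NearlyIndepOn P G H D ε) (hG' : G' ≤ G) :
    NearlyIndepOn P G' H D ε :=
  fun E A hE => h E A (hG' _ hE)

theorem indicatorCov_lt [IsFiniteMeasure P] (h : NearlyIndepOn P G H D ε) {E A : Set Ω}
    (hE : MeasurableSet[G] E) (hA : MeasurableSet[H] A) (hAD : A ⊆ D) (hA0 : 0 < P A) :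
    indicatorCov P E A < ε * P.real A := by
  have hA0' : 0 < P.real A := ENNReal.toReal_pos hA0.ne' (measure_ne_top _ _)
  rw [indicatorCov_eq_mul E hA0'.ne', mul_lt_mul_iff_left₀ hA0']
  exact (abs_lt.1 (h E A hE hA hAD hA0)).2

theorem sum_abs_indicatorCov_le [IsProbabilityMeasure P] (hG : G ≤ mΩ) (hH : H ≤ mΩ)
    (h : NearlyIndepOn P G H D ε) {ι : Type*} [Fintype ι] {E : ι → Set Ω}
    (hE : IsMeasurablePartition G E) {B : Set Ω} (hB : MeasurableSet[H] B) (hBD : B ⊆ D) :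
    ∑ i, |indicatorCov P (E i) B| ≤ 2 * (ε * P.real B) := by
  rcases eq_zero_or_pos (P B) with hB0 | hB0
  · have hB0' : P.real B = 0 := by rw [measureReal_def, hB0, ENNReal.toReal_zero]
    simpa [hB0'] using (hE.mono hG).sum_abs_indicatorCov_le (P := P) (hH _ hB)
  · refine (hE.mono hG).sum_abs_indicatorCov_le_of_forall_le (hH _ hB) fun s => ?_
    exact (h.indicatorCov_lt (s.measurableSet_biUnion fun i _ => hE.measurableSet i) hB hBD
      hB0).le

end NearlyIndepOn

theorem betaMix_le_of_nearlyIndepOn [IsProbabilityMeasure P] (hG : G ≤ mΩ) (hH : H ≤ mΩ)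
    {D : Set Ω} {ε : ℝ} (hD : MeasurableSet[H] D) (hPD : 1 - ε < P.real D)
    (h : NearlyIndepOn P G H D ε) : betaMix P G H ≤ 2 * ε := by
  have hD' := hH _ hD
  suffices hsum : ∀ x ∈ partitionSums P G H, x ≤ 4 * ε by linarith [betaMix_le hsum]
  rintro _ ⟨I, J, E, A, hE, hA, rfl⟩
  calc ∑ i, ∑ j, |indicatorCov P (E i) (A j)|
      = ∑ j, ∑ i, |indicatorCov P (E i) (A j ∩ D) + indicatorCov P (E i) (A j \ D)| := by
        rw [Finset.sum_comm]
        simp only [← indicatorCov_eq_inter_add_diff _ _ hD']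
    _ ≤ ∑ j, (2 * (ε * P.real (A j ∩ D)) + 2 * P.real (A j ∩ Dᶜ)) := by
        refine Finset.sum_le_sum fun j _ => (Finset.sum_le_sum fun i _ => abs_add_le _ _).trans ?_
        rw [Finset.sum_add_distrib]
        exact add_le_add (h.sum_abs_indicatorCov_le hG hH hE ((hA.measurableSet j).inter hD)
          Set.inter_subset_right)
          ((hE.mono hG).sum_abs_indicatorCov_le ((hH _ (hA.measurableSet j)).diff hD'))
    _ = 2 * ε * P.real D + 2 * P.real Dᶜ := by
        rw [Finset.sum_add_distrib, ← Finset.mul_sum, ← Finset.mul_sum, ← Finset.mul_sum,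
          (hA.mono hH).sum_measureReal_inter hD', (hA.mono hH).sum_measureReal_inter hD'.compl]
        ring
    _ ≤ 4 * ε := by
        rw [probReal_compl_eq_one_sub hD']
        nlinarith [measureReal_le_one (μ := P) (s := D)]

section Atoms

variable {ι : Type*} {m : MeasurableSpace Ω}

def atom (E : ι → Set Ω) (σ : ι → Bool) : Set Ω := {ω | ∀ k, ω ∈ E k ↔ σ k}

theorem isMeasurablePartition_atom [Countable ι] {E : ι → Set Ω}
    (hE : ∀ k, MeasurableSet[m] (E k)) : IsMeasurablePartition m (atom E) where
  measurableSet σ := by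
    simp only [atom, Set.ofPred_forall]
    refine MeasurableSet.iInter fun k => ?_
    cases σ k
    · simp only [Bool.false_eq_true, iff_false]
      exact (hE k).compl
    · simp only [iff_true]
      exact hE k
  pairwise_disjoint σ τ hστ := Set.disjoint_left.2 fun ω hσ hτ =>
    hστ (funext fun k => Bool.eq_iff_iff.2 ((hσ k).symm.trans (hτ k)))
  iUnion_eq_univ := by
    classical
    exact Set.eq_univ_of_forall fun ω =>
      Set.mem_iUnion.2 ⟨fun k => decide (ω ∈ E k), fun k => by simp⟩

theorem biUnion_atom_eq [Fintype ι] [DecidableEq ι] (E : ι → Set Ω) (k : ι) :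
    ⋃ σ ∈ Finset.univ.filter (fun σ : ι → Bool => σ k), atom E σ = E k := by
  classical
  ext ω
  simp only [Set.mem_iUnion, Finset.mem_filter, Finset.mem_univ, true_and, exists_prop, atom,
    Set.mem_ofPred_eq]
  exact ⟨fun ⟨σ, hσk, hω⟩ => (hω k).2 hσk, fun hω => ⟨fun k => decide (ω ∈ E k), by simpa, by simp⟩⟩

theorem isMeasurablePartition_option_elim {A : ι → Set Ω} [Countable ι]
    (hA : ∀ k, MeasurableSet[m] (A k)) (hd : Pairwise (Disjoint on A)) :
    IsMeasurablePartition m fun o : Option ι => o.elim (⋃ k, A k)ᶜ A where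
  measurableSet o := by
    cases o
    · exact (MeasurableSet.iUnion hA).compl
    · exact hA _
  pairwise_disjoint o o' hoo' := by
    cases o <;> cases o'
    · exact absurd rfl hoo'
    · exact disjoint_compl_left.mono_right (Set.subset_iUnion A _)
    · exact disjoint_compl_right.mono_left (Set.subset_iUnion A _)
    · exact hd fun h => hoo' (congrArg some h)
  iUnion_eq_univ := by
    refine Set.eq_univ_of_forall fun ω => Set.mem_iUnion.2 ?_
    by_cases hω : ω ∈ ⋃ k, A k
    · obtain ⟨k, hk⟩ := Set.mem_iUnion.1 hω
      exact ⟨some k, hk⟩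
    · exact ⟨none, hω⟩

end Atoms

theorem sum_abs_indicatorCov_diag_le_two_mul_betaMix [IsProbabilityMeasure P] (hG : G ≤ mΩ)
    (hH : H ≤ mΩ) {ι : Type*} [Fintype ι] {E A : ι → Set Ω} (hE : ∀ k, MeasurableSet[G] (E k))
    (hA : ∀ k, MeasurableSet[H] (A k)) (hd : Pairwise (Disjoint on A)) :
    ∑ k, |indicatorCov P (E k) (A k)| ≤ 2 * betaMix P G H := by
  classical
  have hC := isMeasurablePartition_atom hE
  calc ∑ k, |indicatorCov P (E k) (A k)|
      ≤ ∑ k, ∑ σ, |indicatorCov P (atom E σ) (A k)| := Finset.sum_le_sum fun k _ => by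
        rw [← biUnion_atom_eq E k]
        exact (hC.mono hG).abs_indicatorCov_biUnion_le _ (hH _ (hA k))
    _ = ∑ σ, ∑ k, |indicatorCov P (atom E σ) (A k)| := Finset.sum_comm
    _ ≤ ∑ σ, ∑ o : Option ι, |indicatorCov P (atom E σ) (o.elim (⋃ k, A k)ᶜ A)| :=
        Finset.sum_le_sum fun σ _ => by
          rw [Fintype.sum_option]
          exact le_add_of_nonneg_left (abs_nonneg _)
    _ ≤ 2 * betaMix P G H :=
        sum_abs_indicatorCov_le_two_mul_betaMix hG hH hC (isMeasurablePartition_option_elim hA hd)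

theorem exists_nearlyIndepOn_of_betaMix_lt [IsProbabilityMeasure P] (hG : G ≤ mΩ) (hH : H ≤ mΩ)
    {ε : ℝ} (hε : 0 < ε) (hβ : betaMix P G H < ε ^ 2 / 2) :
    ∃ D, MeasurableSet[H] D ∧ 1 - ε < P.real D ∧ NearlyIndepOn P G H D ε := by
  set Bad : Set (Set Ω) := {A | MeasurableSet[H] A ∧ 0 < P A ∧
    ∃ E, MeasurableSet[G] E ∧ ε * P.real A ≤ |indicatorCov P E A|}
  obtain ⟨𝒜, ⟨h𝒜Bad, h𝒜d⟩, hmax⟩ := exists_maximal_pairwiseDisjoint Bad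
  have h𝒜H : ∀ A ∈ 𝒜, MeasurableSet[H] A := fun A hA => (h𝒜Bad hA).1
  have h𝒜c : 𝒜.Countable := h𝒜d.countable_of_measure_pos (μ := P)
    (fun A hA => hH _ (h𝒜H A hA)) fun A hA => (h𝒜Bad hA).2.1
  have hU : MeasurableSet[H] (⋃₀ 𝒜) := MeasurableSet.sUnion h𝒜c h𝒜H
  have hPU : P.real (⋃₀ 𝒜) ≤ 2 * betaMix P G H / ε := by
    refine measureReal_sUnion_le_of_forall_finset h𝒜c h𝒜d (fun A hA => hH _ (h𝒜H A hA))
      fun t => ?_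
    choose E hE hEA using fun A : t => (h𝒜Bad A.1.2).2.2
    rw [le_div_iff₀' hε, ← Finset.sum_coe_sort, Finset.mul_sum]
    refine (Finset.sum_le_sum fun A _ => hEA A).trans
      (sum_abs_indicatorCov_diag_le_two_mul_betaMix hG hH hE (fun A => (h𝒜Bad A.1.2).1) ?_)
    exact fun A B hAB => h𝒜d A.1.2 B.1.2 fun h => hAB (Subtype.ext (Subtype.ext h))
  refine ⟨(⋃₀ 𝒜)ᶜ, hU.compl, ?_, fun E A hE hA hAD hA0 => ?_⟩
  · rw [probReal_compl_eq_one_sub (hH _ hU)]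
    have : 2 * betaMix P G H / ε < ε := by rw [div_lt_iff₀ hε]; nlinarith
    linarith
  by_contra! hbad
  have hA0' : 0 < P.real A := ENNReal.toReal_pos hA0.ne' (measure_ne_top _ _)
  have hABad : A ∈ Bad := ⟨hA, hA0, E, hE, by
    rw [indicatorCov_eq_mul E hA0'.ne', abs_mul, abs_of_pos hA0']
    exact mul_le_mul_of_nonneg_right hbad hA0'.le⟩
  have hA𝒜 : A ∉ 𝒜 := fun h => hA0.ne' (measure_mono_null
    (fun _ hx => absurd (Set.subset_sUnion_of_mem h hx) (hAD hx)) measure_empty)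
  refine hA𝒜 (hmax ⟨Set.insert_subset hABad h𝒜Bad, h𝒜d.insert fun B hB _ => ?_⟩
    (Set.subset_insert _ _) (Set.mem_insert A 𝒜))
  exact Set.disjoint_of_subset hAD (Set.subset_sUnion_of_mem hB) disjoint_compl_left

end BetaMixing

open BetaMixing in
/-- `lim_{b→∞} β(𝒢_b, ℋ) = 0` iff the weak-Bernoulli-type condition holds:
for every `ε > 0` there are `D ∈ ℋ` with `P(D) > 1 − ε` and `b > 0` such that
for all `E ∈ 𝒢_b` and `A ∈ ℋ` with `A ⊆ D`, `P(A) > 0`, one has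
`|P(E|A) − P(E)| < ε`. -/
theorem stmt1 {Ω : Type*} [F : MeasurableSpace Ω] (P : Measure Ω) [IsProbabilityMeasure P]
    (G : ℝ → MeasurableSpace Ω) (H : MeasurableSpace Ω)
    (hG : ∀ b, G b ≤ F) (hH : H ≤ F)
    (hanti : ∀ b b' : ℝ, 0 < b → b ≤ b' → G b' ≤ G b) :
    Filter.Tendsto (fun b => @betaMix Ω F P (G b) H) Filter.atTop (nhds 0) ↔
      (∀ ε : ℝ, 0 < ε → ∃ D : Set Ω, MeasurableSet[H] D ∧ 1 - ε < (P D).toReal ∧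
        ∃ b : ℝ, 0 < b ∧ ∀ E A : Set Ω, MeasurableSet[G b] E → MeasurableSet[H] A →
          A ⊆ D → 0 < P A →
          |(P (E ∩ A)).toReal / (P A).toReal - (P E).toReal| < ε) := by
  constructor
  · intro hβ ε hε
    obtain ⟨b, hβb, hb⟩ := ((hβ.eventually_lt_const (by positivity : (0 : ℝ) < ε ^ 2 / 2)).and
      (Filter.eventually_gt_atTop 0)).exists
    obtain ⟨D, hD, hPD, hDb⟩ := exists_nearlyIndepOn_of_betaMix_lt (hG b) hH hε hβb
    exact ⟨D, hD, hPD, b, hb, hDb⟩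
  · intro h
    refine Metric.tendsto_atTop.2 fun δ hδ => ?_
    obtain ⟨D, hD, hPD, b, hb, hDb⟩ := h (δ / 4) (by positivity)
    refine ⟨b, fun b' hb' => ?_⟩
    have hβ := betaMix_le_of_nearlyIndepOn (hG b') hH hD hPD
      (NearlyIndepOn.mono_left hDb (hanti b b' hb hb'))
    rw [Real.dist_eq, sub_zero, abs_of_nonneg (betaMix_nonneg (hG b') hH)]
    linarith
end
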